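/- Let ψ be a unit vector in ℂ^d, let k ≥ 1 and a > 0, let p : Fin m → ℝ be a probability vector, and let σ_z (z ∈ Fin m) be density matrices on ℂ^d such that ∑_z p_z (1 − ⟨ψ|σ_z|ψ⟩) ≤ δ. Then (1/2)‖∑_z p_z σ_z^{⊗k} − (|ψ⟩⟨ψ|)^{⊗k}‖₁ ≤ kδ/a + k√a. -/

import Mathlib

/-!
Write `P = |ψ⟩⟨ψ|` and `Δ = σ - P`. Since `σ = Δ + P ≥ 0` and `P` has rank one, `Δ` has at most
one negative eigenvalue, and the `2 × 2` principal minors of `σ` in an eigenbasis of `Δ` show that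
`μ := tr Δ⁻ = tr Δ⁺` satisfies `μ ≤ 1` and `μ² ≤ 1 - ⟨ψ|σ|ψ⟩`; hence
`μ ≤ (1 - ⟨ψ|σ|ψ⟩) / a + √a` (split on whether `1 - ⟨ψ|σ|ψ⟩ ≥ a`).
A hybrid argument writes `σ^{⊗k} - P^{⊗k}` as the sum over the slots `t < k` of
`P^{⊗t} ⊗ (Δ⁺ - Δ⁻) ⊗ σ^{⊗(k-t-1)}`, i.e. as `X - Y` with `X, Y ≥ 0` of trace `kμ` each.
Averaging over `z` and using `‖X - Y‖₁ ≤ tr X + tr Y` gives the bound.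
-/

open Matrix ComplexOrder

noncomputable def traceNorm {n : Type*} [Fintype n] [DecidableEq n]
    (A : Matrix n n ℂ) : ℝ :=
  (((Matrix.posSemidef_conjTranspose_mul_self A).1.eigenvectorUnitary.1 *
      diagonal (((↑) : ℝ → ℂ) ∘ (√·) ∘ (Matrix.posSemidef_conjTranspose_mul_self A).1.eigenvalues) *
      (star (Matrix.posSemidef_conjTranspose_mul_self A).1.eigenvectorUnitary :
        Matrix n n ℂ)).trace).re

noncomputable def ketbra {d : ℕ} (ψ : Fin d → ℂ) : Matrix (Fin d) (Fin d) ℂ :=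
  fun i j => ψ i * (starRingEnd ℂ) (ψ j)

noncomputable def kronPow {d : ℕ} (M : Matrix (Fin d) (Fin d) ℂ) (k : ℕ) :
    Matrix (Fin k → Fin d) (Fin k → Fin d) ℂ :=
  fun i j => ∏ t : Fin k, M (i t) (j t)

noncomputable def fid {d : ℕ} (ψ : Fin d → ℂ) (σ : Matrix (Fin d) (Fin d) ℂ) : ℝ :=
  (∑ i, ∑ j, (starRingEnd ℂ) (ψ i) * σ i j * ψ j).re

open Finset

/- Here `l` stands for the eigenvalues of `Δ = σ - |ψ⟩⟨ψ|` and `a i = |⟨vᵢ|ψ⟩|²` for its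
eigenvectors `vᵢ`: then `l i + a i` and `a i * a j` are the diagonal entries and the squared
off-diagonal moduli of `σ` in that eigenbasis, so `hdiag` and `hminor` say that `σ ≥ 0`. -/
section NegPart

variable {ι : Type*} {l a : ι → ℝ}

theorem nonneg_of_neg_of_ne (hdiag : ∀ i, 0 ≤ l i + a i)
    (hminor : ∀ i j, i ≠ j → a i * a j ≤ (l i + a i) * (l j + a j)) {i j : ι}
    (hi : l i < 0) (hji : j ≠ i) : 0 ≤ l j := by
  by_contra! hj
  nlinarith [hminor i j hji.symm, hdiag i, hdiag j, mul_pos_of_neg_of_neg hi hj]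

theorem sum_negPart_eq_of_neg [Fintype ι] (hdiag : ∀ i, 0 ≤ l i + a i)
    (hminor : ∀ i j, i ≠ j → a i * a j ≤ (l i + a i) * (l j + a j)) {i : ι} (hi : l i < 0) :
    ∑ j, (l j)⁻ = -l i := by
  rw [sum_eq_single i (fun j _ hj => negPart_eq_zero.2 (nonneg_of_neg_of_ne hdiag hminor hi hj))
    (by simp), negPart_eq_neg.2 hi.le]

theorem sum_negPart_le_sum [Fintype ι] (ha : ∀ i, 0 ≤ a i) (hdiag : ∀ i, 0 ≤ l i + a i)
    (hminor : ∀ i j, i ≠ j → a i * a j ≤ (l i + a i) * (l j + a j)) :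
    ∑ i, (l i)⁻ ≤ ∑ i, a i := by
  by_cases h : ∃ i, l i < 0
  · obtain ⟨i, hi⟩ := h
    rw [sum_negPart_eq_of_neg hdiag hminor hi]
    exact (by linarith [hdiag i] : -l i ≤ a i).trans (single_le_sum (fun j _ => ha j) (mem_univ i))
  · simp only [not_exists, not_lt] at h
    simpa [negPart_eq_zero.2 (h _)] using sum_nonneg fun i _ => ha i

theorem sq_sum_negPart_le [Fintype ι] (hl : ∑ i, l i = 0) (hdiag : ∀ i, 0 ≤ l i + a i)
    (hminor : ∀ i j, i ≠ j → a i * a j ≤ (l i + a i) * (l j + a j)) :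
    (∑ i, (l i)⁻) ^ 2 ≤ -∑ i, l i * a i := by
  classical
  by_cases h : ∃ i, l i < 0
  · obtain ⟨i, hi⟩ := h
    rw [sum_negPart_eq_of_neg hdiag hminor hi]
    have hrest : ∑ j ∈ univ.erase i, l j = -l i := by
      linarith [add_sum_erase univ l (mem_univ i)]
    have hgap : 0 ≤ a i + l i := by linarith [hdiag i]
    have hle : ∀ j ∈ univ.erase i, l j * a j ≤ l j * (a i + l i) := by
      intro j hj
      have hj0 := nonneg_of_neg_of_ne hdiag hminor hi (ne_of_mem_erase hj)
      have hj_le : l j ≤ -l i := hrest ▸ single_le_sum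
        (fun s hs => nonneg_of_neg_of_ne hdiag hminor hi (ne_of_mem_erase hs)) hj
      have h1 : -l i * a j ≤ l j * (a i + l i) := by nlinarith [hminor j i (ne_of_mem_erase hj)]
      refine le_of_mul_le_mul_left ?_ (neg_pos.2 hi)
      nlinarith [mul_le_mul_of_nonneg_left h1 hj0,
        mul_le_mul_of_nonneg_right hj_le (mul_nonneg hj0 hgap)]
    have hsum : ∑ j ∈ univ.erase i, l j * a j ≤ -l i * (a i + l i) := by
      rw [← hrest, sum_mul]
      exact sum_le_sum hle
    rw [← add_sum_erase univ _ (mem_univ i)]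
    nlinarith
  · simp only [not_exists, not_lt] at h
    have hz : ∀ i, l i = 0 := fun i =>
      (sum_eq_zero_iff_of_nonneg fun j _ => h j).1 hl i (mem_univ i)
    simp [hz]

end NegPart

theorem le_div_add_sqrt_of_sq_le {μ e a : ℝ} (ha : 0 < a) (h1 : μ ≤ 1) (h2 : μ ^ 2 ≤ e) :
    μ ≤ e / a + √a := by
  rcases le_total a e with hae | hea
  · linarith [(one_le_div ha).2 hae, Real.sqrt_nonneg a]
  · have hμ : μ ≤ √a := Real.le_sqrt_of_sq_le (h2.trans hea)
    linarith [div_nonneg ((sq_nonneg μ).trans h2) ha.le]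

/-- `piKron (hybrid k N M M t)` runs from `M^{⊗k}` at `t = 0` to `N^{⊗k}` at `t = k`. -/
def hybrid {α : Type*} (k : ℕ) (N X M : α) (t : ℕ) : Fin k → α :=
  fun s => if (s : ℕ) < t then N else if (s : ℕ) = t then X else M

namespace Matrix

section piKron

variable {ι n R : Type*}

def piKron [Fintype ι] [CommMonoid R] (M : ι → Matrix n n R) : Matrix (ι → n) (ι → n) R :=
  of fun i j => ∏ t, M t (i t) (j t)

theorem piKron_sub_piKron_of_eq_off [Fintype ι] [CommRing R] {A B C : ι → Matrix n n R} (t : ι)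
    (hC : C t = A t - B t) (hA : ∀ s ≠ t, A s = C s) (hB : ∀ s ≠ t, B s = C s) :
    piKron A - piKron B = piKron C := by
  classical
  ext i j
  have split := fun D : ι → Matrix n n R =>
    (mul_prod_erase univ (fun s => D s (i s) (j s)) (mem_univ t)).symm
  have off : ∀ D : ι → Matrix n n R, (∀ s ≠ t, D s = C s) →
      ∏ s ∈ univ.erase t, D s (i s) (j s) = ∏ s ∈ univ.erase t, C s (i s) (j s) :=
    fun D hD => prod_congr rfl fun s hs => by rw [hD s (ne_of_mem_erase hs)]
  simp only [sub_apply, piKron, of_apply]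
  rw [split A, split B, split C, off A hA, off B hB, hC, sub_apply, sub_mul]

theorem trace_piKron [Fintype ι] [DecidableEq ι] [Fintype n] [CommSemiring R]
    (M : ι → Matrix n n R) : (piKron M).trace = ∏ t, (M t).trace := by
  simp only [trace, diag, piKron, of_apply, prod_univ_sum, Fintype.piFinset_univ]

theorem posSemidef_of_entrywise_prod {𝕜 κ : Type*} [RCLike 𝕜] [Finite n] (s : Finset κ)
    (A : κ → Matrix n n 𝕜) (h : ∀ t ∈ s, (A t).PosSemidef) :
    (of fun i j => ∏ t ∈ s, A t i j).PosSemidef := by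
  classical
  induction s using Finset.induction_on with
  | empty => simpa [vecMulVec] using posSemidef_vecMulVec_self_star (fun _ : n => (1 : 𝕜))
  | insert a s ha ih =>
    have e : (of fun i j => ∏ t ∈ insert a s, A t i j) = A a ⊙ of fun i j => ∏ t ∈ s, A t i j := by
      ext i j; simp [prod_insert ha]
    rw [e]
    exact (h a (mem_insert_self a s)).hadamard (ih fun t ht => h t (mem_insert_of_mem ht))

theorem PosSemidef.piKron {𝕜 : Type*} [RCLike 𝕜] [Fintype ι] [Finite n] {M : ι → Matrix n n 𝕜}
    (hM : ∀ t, (M t).PosSemidef) : (piKron M).PosSemidef :=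
  posSemidef_of_entrywise_prod univ (fun t => (M t).submatrix (fun i : ι → n => i t) (· t))
    fun t _ => (hM t).submatrix _

end piKron

section hybrid

variable {n R : Type*} {k t : ℕ}

theorem piKron_hybrid_sub [CommRing R] (ht : t < k) (N X Y M : Matrix n n R) :
    piKron (hybrid k N X M t) - piKron (hybrid k N Y M t) = piKron (hybrid k N (X - Y) M t) :=
  piKron_sub_piKron_of_eq_off ⟨t, ht⟩ (by simp [hybrid])
    (fun s hs => by simp [hybrid, Fin.ext_iff.not.1 hs])
    (fun s hs => by simp [hybrid, Fin.ext_iff.not.1 hs])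

theorem piKron_const_sub_piKron_const [CommRing R] {M N X Y : Matrix n n R}
    (h : M - N = X - Y) :
    piKron (fun _ : Fin k => M) - piKron (fun _ => N) =
      ∑ t ∈ range k, (piKron (hybrid k N X M t) - piKron (hybrid k N Y M t)) := by
  have step : ∀ t < k, piKron (hybrid k N M M t) - piKron (hybrid k N M M (t + 1)) =
      piKron (hybrid k N X M t) - piKron (hybrid k N Y M t) := by
    intro t ht
    have e : hybrid k N M M (t + 1) = hybrid k N N M t := by
      funext s; simp only [hybrid]; split_ifs <;> first | rfl | omega
    rw [e, piKron_hybrid_sub ht, piKron_hybrid_sub ht, h]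
  have h0 : hybrid k N M M 0 = fun _ => M := by funext s; simp [hybrid]
  have hk : hybrid k N M M k = fun _ => N := by funext s; simp [hybrid, s.isLt]
  rw [sum_congr rfl fun t ht => (step t (mem_range.1 ht)).symm,
    sum_range_sub' (fun t => piKron (hybrid k N M M t)), h0, hk]

theorem posSemidef_piKron_hybrid {𝕜 : Type*} [RCLike 𝕜] [Finite n] {N X M : Matrix n n 𝕜}
    (hN : N.PosSemidef) (hX : X.PosSemidef) (hM : M.PosSemidef) :
    (piKron (hybrid k N X M t)).PosSemidef :=
  PosSemidef.piKron fun s => by unfold hybrid; split_ifs <;> assumption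

theorem trace_piKron_hybrid [CommRing R] [Fintype n] (ht : t < k) {N X M : Matrix n n R}
    (hN : N.trace = 1) (hM : M.trace = 1) : (piKron (hybrid k N X M t)).trace = X.trace := by
  rw [trace_piKron, prod_eq_single ⟨t, ht⟩]
  · simp [hybrid]
  · intro s _ hs
    simp only [hybrid, if_neg fun h => hs (Fin.ext h)]
    split_ifs <;> assumption
  · simp

theorem exists_piKron_const_sub_eq_sub {𝕜 : Type*} [RCLike 𝕜] [Fintype n] (k : ℕ)
    {M N X Y : Matrix n n 𝕜} (hM : M.PosSemidef) (hN : N.PosSemidef) (hX : X.PosSemidef)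
    (hY : Y.PosSemidef) (hMtr : M.trace = 1) (hNtr : N.trace = 1) (h : M - N = X - Y) :
    ∃ X' Y' : Matrix (Fin k → n) (Fin k → n) 𝕜, X'.PosSemidef ∧ Y'.PosSemidef ∧
      piKron (fun _ => M) - piKron (fun _ => N) = X' - Y' ∧
      X'.trace = k * X.trace ∧ Y'.trace = k * Y.trace := by
  refine ⟨∑ t ∈ range k, piKron (hybrid k N X M t), ∑ t ∈ range k, piKron (hybrid k N Y M t),
    posSemidef_sum _ fun t _ => posSemidef_piKron_hybrid hN hX hM,
    posSemidef_sum _ fun t _ => posSemidef_piKron_hybrid hN hY hM,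
    by rw [piKron_const_sub_piKron_const h, sum_sub_distrib], ?_, ?_⟩ <;>
  · rw [trace_sum, sum_congr rfl fun t ht => trace_piKron_hybrid (mem_range.1 ht) hNtr hMtr]
    simp

end hybrid

theorem PosSemidef.norm_apply_sq_le {n : Type*} {M : Matrix n n ℂ} (hM : M.PosSemidef) (i j : n) :
    ‖M i j‖ ^ 2 ≤ (M i i).re * (M j j).re := by
  have hdet := (hM.submatrix ![i, j]).det_nonneg
  rw [det_fin_two] at hdet
  simp only [submatrix_apply, cons_val_zero, cons_val_one] at hdet
  have hji : M j i = star (M i j) := (hM.isHermitian.apply j i).symm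
  have hii := (Complex.nonneg_iff.1 (hM.diag_nonneg (i := i))).2
  have hjj := (Complex.nonneg_iff.1 (hM.diag_nonneg (i := j))).2
  rw [hji, Complex.star_def, Complex.mul_conj, Complex.normSq_eq_norm_sq] at hdet
  have := (Complex.nonneg_iff.1 hdet).1
  simp only [Complex.sub_re, Complex.mul_re, Complex.ofReal_re, ← hii, ← hjj, mul_zero,
    sub_zero] at this
  linarith

section RankOnePerturbation

variable {n : Type*}

theorem re_diagonal_add_vecMulVec_apply_self [DecidableEq n] (l : n → ℝ) (y : n → ℂ) (i : n) :
    ((diagonal (RCLike.ofReal ∘ l) + vecMulVec y (star y) : Matrix n n ℂ) i i).re =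
      l i + ‖y i‖ ^ 2 := by
  simp [vecMulVec_apply, ← Complex.normSq_apply, Complex.normSq_eq_norm_sq]

theorem norm_diagonal_add_vecMulVec_apply [DecidableEq n] (l : n → ℝ) (y : n → ℂ) {i j : n}
    (hij : i ≠ j) :
    ‖(diagonal (RCLike.ofReal ∘ l) + vecMulVec y (star y) : Matrix n n ℂ) i j‖ =
      ‖y i‖ * ‖y j‖ := by
  simp [vecMulVec_apply, hij]

variable [Fintype n]

theorem star_dotProduct_self (x : n → ℂ) : star x ⬝ᵥ x = ((∑ i, ‖x i‖ ^ 2 : ℝ) : ℂ) := by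
  simp [dotProduct, Complex.conj_mul']

theorem star_mulVec_dotProduct_mulVec_mulVec {R : Type*} [NonUnitalSemiring R] [StarRing R]
    (U A : Matrix n n R) (x : n → R) :
    star (U *ᵥ x) ⬝ᵥ (A *ᵥ (U *ᵥ x)) = star x ⬝ᵥ ((Uᴴ * A * U) *ᵥ x) := by
  rw [star_mulVec, ← dotProduct_mulVec, mulVec_mulVec, mulVec_mulVec, Matrix.mul_assoc]

theorem sum_norm_sq_conjTranspose_mulVec [DecidableEq n] {U : Matrix n n ℂ}
    (hU : U ∈ unitary (Matrix n n ℂ)) (x : n → ℂ) :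
    ∑ i, ‖(Uᴴ *ᵥ x) i‖ ^ 2 = ∑ i, ‖x i‖ ^ 2 := by
  have h := star_mulVec_dotProduct_mulVec_mulVec Uᴴ 1 x
  rw [one_mulVec, Matrix.mul_one, conjTranspose_conjTranspose, ← star_eq_conjTranspose,
    Unitary.mul_star_self_of_mem hU, one_mulVec, star_dotProduct_self, star_dotProduct_self] at h
  exact_mod_cast h

namespace IsHermitian

variable [DecidableEq n]

theorem trace_cfc {𝕜 : Type*} [RCLike 𝕜] {A : Matrix n n 𝕜} (hA : A.IsHermitian)
    (f : ℝ → ℝ) : (cfc f A).trace = ∑ i, (f (hA.eigenvalues i) : 𝕜) := by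
  rw [hA.cfc_eq, IsHermitian.cfc, Unitary.conjStarAlgAut_apply, trace_mul_cycle,
    Unitary.coe_star_mul_self, one_mul, trace_diagonal]
  rfl

variable {A : Matrix n n ℂ}

section

variable (hA : A.IsHermitian)

theorem re_trace_negPart : A⁻.trace.re = ∑ i, (hA.eigenvalues i)⁻ := by
  rw [CFC.negPart_def, cfcₙ_eq_cfc, hA.trace_cfc]
  simp [Complex.re_sum]

theorem conjTranspose_eigenvectorUnitary_mul_mul :
    (hA.eigenvectorUnitary : Matrix n n ℂ)ᴴ * A * (hA.eigenvectorUnitary : Matrix n n ℂ) =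
      diagonal (RCLike.ofReal ∘ hA.eigenvalues) := by
  simpa [Unitary.conjStarAlgAut_star_apply, star_eq_conjTranspose]
    using hA.conjStarAlgAut_star_eigenvectorUnitary

theorem conjTranspose_eigenvectorUnitary_mul_add_vecMulVec_mul (x : n → ℂ) :
    (hA.eigenvectorUnitary : Matrix n n ℂ)ᴴ * (A + vecMulVec x (star x)) *
      (hA.eigenvectorUnitary : Matrix n n ℂ) =
      diagonal (RCLike.ofReal ∘ hA.eigenvalues) +
        vecMulVec ((hA.eigenvectorUnitary : Matrix n n ℂ)ᴴ *ᵥ x)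
          (star ((hA.eigenvectorUnitary : Matrix n n ℂ)ᴴ *ᵥ x)) := by
  rw [Matrix.mul_add, Matrix.add_mul, hA.conjTranspose_eigenvectorUnitary_mul_mul, mul_vecMulVec,
    vecMulVec_mul, star_mulVec, conjTranspose_conjTranspose]

theorem re_dotProduct_mulVec (x : n → ℂ) :
    (star x ⬝ᵥ (A *ᵥ x)).re =
      ∑ i, hA.eigenvalues i * ‖((hA.eigenvectorUnitary : Matrix n n ℂ)ᴴ *ᵥ x) i‖ ^ 2 := by
  set U : Matrix n n ℂ := (hA.eigenvectorUnitary : Matrix n n ℂ)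
  have hx : U *ᵥ (Uᴴ *ᵥ x) = x := by
    rw [mulVec_mulVec, ← star_eq_conjTranspose,
      Unitary.mul_star_self_of_mem hA.eigenvectorUnitary.prop, one_mulVec]
  conv_lhs => rw [← hx, star_mulVec_dotProduct_mulVec_mulVec,
    hA.conjTranspose_eigenvectorUnitary_mul_mul]
  simp only [dotProduct, mulVec_diagonal, Complex.re_sum]
  refine sum_congr rfl fun i _ => ?_
  rw [Pi.star_apply, Function.comp_apply, mul_left_comm, Complex.star_def,
    ← Complex.normSq_eq_conj_mul_self, Complex.normSq_eq_norm_sq]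
  exact Complex.re_ofReal_mul _ _ |>.trans (congrArg _ (Complex.ofReal_re _))

theorem eigenvalues_add_norm_sq_nonneg {x : n → ℂ} (h : (A + vecMulVec x (star x)).PosSemidef)
    (i : n) :
    0 ≤ hA.eigenvalues i + ‖((hA.eigenvectorUnitary : Matrix n n ℂ)ᴴ *ᵥ x) i‖ ^ 2 := by
  have hM := h.conjTranspose_mul_mul_same (hA.eigenvectorUnitary : Matrix n n ℂ)
  rw [hA.conjTranspose_eigenvectorUnitary_mul_add_vecMulVec_mul] at hM
  rw [← re_diagonal_add_vecMulVec_apply_self]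
  exact (Complex.nonneg_iff.1 hM.diag_nonneg).1

theorem norm_sq_mul_norm_sq_le {x : n → ℂ} (h : (A + vecMulVec x (star x)).PosSemidef) {i j : n}
    (hij : i ≠ j) :
    ‖((hA.eigenvectorUnitary : Matrix n n ℂ)ᴴ *ᵥ x) i‖ ^ 2 *
        ‖((hA.eigenvectorUnitary : Matrix n n ℂ)ᴴ *ᵥ x) j‖ ^ 2 ≤
      (hA.eigenvalues i + ‖((hA.eigenvectorUnitary : Matrix n n ℂ)ᴴ *ᵥ x) i‖ ^ 2) *
        (hA.eigenvalues j + ‖((hA.eigenvectorUnitary : Matrix n n ℂ)ᴴ *ᵥ x) j‖ ^ 2) := by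
  have hM := h.conjTranspose_mul_mul_same (hA.eigenvectorUnitary : Matrix n n ℂ)
  rw [hA.conjTranspose_eigenvectorUnitary_mul_add_vecMulVec_mul] at hM
  have := hM.norm_apply_sq_le i j
  rwa [norm_diagonal_add_vecMulVec_apply _ _ hij, re_diagonal_add_vecMulVec_apply_self,
    re_diagonal_add_vecMulVec_apply_self, mul_pow] at this

end

theorem re_trace_negPart_le {x : n → ℂ} (hA : A.IsHermitian)
    (h : (A + vecMulVec x (star x)).PosSemidef) :
    A⁻.trace.re ≤ ∑ i, ‖x i‖ ^ 2 := by
  rw [hA.re_trace_negPart, ← sum_norm_sq_conjTranspose_mulVec hA.eigenvectorUnitary.prop]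
  exact sum_negPart_le_sum (fun _ => sq_nonneg _) (hA.eigenvalues_add_norm_sq_nonneg h)
    fun _ _ hij => hA.norm_sq_mul_norm_sq_le h hij

theorem sq_re_trace_negPart_le {x : n → ℂ} (hA : A.IsHermitian)
    (h : (A + vecMulVec x (star x)).PosSemidef) (htr : A.trace = 0) :
    A⁻.trace.re ^ 2 ≤ -(star x ⬝ᵥ (A *ᵥ x)).re := by
  have hl : ∑ i, hA.eigenvalues i = 0 := by
    simpa [Complex.re_sum] using congrArg Complex.re (hA.trace_eq_sum_eigenvalues.symm.trans htr)
  rw [hA.re_trace_negPart, hA.re_dotProduct_mulVec]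
  exact sq_sum_negPart_le hl (hA.eigenvalues_add_norm_sq_nonneg h)
    fun _ _ hij => hA.norm_sq_mul_norm_sq_le h hij

end IsHermitian

end RankOnePerturbation

section TraceNorm

open scoped MatrixOrder

variable {n : Type*} [Fintype n] [DecidableEq n]

theorem traceNorm_eq_re_trace_abs (A : Matrix n n ℂ) : traceNorm A = (CFC.abs A).trace.re := by
  rw [CFC.abs, star_eq_conjTranspose, CFC.sqrt_eq_real_sqrt _
      (nonneg_iff_posSemidef.2 (posSemidef_conjTranspose_mul_self A)),
    cfcₙ_eq_cfc, (posSemidef_conjTranspose_mul_self A).1.cfc_eq]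
  rfl

theorem IsHermitian.traceNorm_eq_sum_abs_eigenvalues {A : Matrix n n ℂ} (hA : A.IsHermitian) :
    traceNorm A = ∑ i, |hA.eigenvalues i| := by
  rw [traceNorm_eq_re_trace_abs, CFC.abs_eq_cfc_norm A hA.isSelfAdjoint, hA.trace_cfc]
  simp [Complex.re_sum]

theorem trace_conjTranspose_mul_mul_of_mem_unitary {U : Matrix n n ℂ}
    (hU : U ∈ unitary (Matrix n n ℂ)) (B : Matrix n n ℂ) : (Uᴴ * B * U).trace = B.trace := by
  rw [trace_mul_cycle, ← star_eq_conjTranspose, Unitary.mul_star_self_of_mem hU, one_mul]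

theorem traceNorm_sub_le {B C : Matrix n n ℂ} (hB : B.PosSemidef) (hC : C.PosSemidef) :
    traceNorm (B - C) ≤ B.trace.re + C.trace.re := by
  have hA := hB.isHermitian.sub hC.isHermitian
  set U : Matrix n n ℂ := (hA.eigenvectorUnitary : Matrix n n ℂ)
  have hU : U ∈ unitary (Matrix n n ℂ) := hA.eigenvectorUnitary.prop
  have hB' := hB.conjTranspose_mul_mul_same U
  have hC' := hC.conjTranspose_mul_mul_same U
  -- in the eigenbasis of `B - C`, each eigenvalue is a difference of two nonnegative numbers
  have key : ∀ i, |hA.eigenvalues i| ≤ ((Uᴴ * B * U) i i).re + ((Uᴴ * C * U) i i).re := by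
    intro i
    have hi : ((Uᴴ * B * U) i i).re - ((Uᴴ * C * U) i i).re = hA.eigenvalues i := by
      simpa [mul_sub, sub_mul] using congrArg (fun D : Matrix n n ℂ => (D i i).re)
        hA.conjTranspose_eigenvectorUnitary_mul_mul
    have hb := (Complex.nonneg_iff.1 (hB'.diag_nonneg (i := i))).1
    have hc := (Complex.nonneg_iff.1 (hC'.diag_nonneg (i := i))).1
    rw [← hi, abs_sub_le_iff]
    constructor <;> linarith
  calc traceNorm (B - C) = ∑ i, |hA.eigenvalues i| := hA.traceNorm_eq_sum_abs_eigenvalues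
    _ ≤ ∑ i, ((Uᴴ * B * U) i i).re + ∑ i, ((Uᴴ * C * U) i i).re := by
      rw [← sum_add_distrib]; exact sum_le_sum fun i _ => key i
    _ = B.trace.re + C.trace.re := by
      rw [← trace_conjTranspose_mul_mul_of_mem_unitary hU B,
        ← trace_conjTranspose_mul_mul_of_mem_unitary hU C]
      simp [trace, Complex.re_sum]

theorem traceNorm_sum_smul_sub_le {ι : Type*} [Fintype ι] {p : ι → ℝ} (hp0 : ∀ z, 0 ≤ p z)
    (hp1 : ∑ z, p z = 1) {A X Y : ι → Matrix n n ℂ} {B : Matrix n n ℂ}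
    (hX : ∀ z, (X z).PosSemidef) (hY : ∀ z, (Y z).PosSemidef) (h : ∀ z, A z - B = X z - Y z) :
    traceNorm (∑ z, (p z : ℂ) • A z - B) ≤ ∑ z, p z * ((X z).trace.re + (Y z).trace.re) := by
  have hB : B = ∑ z, (p z : ℂ) • B := by
    rw [← sum_smul, ← Complex.ofReal_sum, hp1, Complex.ofReal_one, one_smul]
  have mix : ∀ W : ι → Matrix n n ℂ, (∀ z, (W z).PosSemidef) →
      (∑ z, (p z : ℂ) • W z).PosSemidef := fun W hW =>
    posSemidef_sum _ fun z _ => (hW z).smul (Complex.zero_le_real.2 (hp0 z))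
  calc traceNorm (∑ z, (p z : ℂ) • A z - B)
      = traceNorm (∑ z, (p z : ℂ) • X z - ∑ z, (p z : ℂ) • Y z) := by
        rw [hB, ← sum_sub_distrib, ← sum_sub_distrib]
        simp_rw [← smul_sub, h]
    _ ≤ _ := traceNorm_sub_le (mix X hX) (mix Y hY)
    _ = _ := by simp [trace_sum, Complex.re_sum, mul_add, sum_add_distrib]

end TraceNorm

end Matrix

open scoped MatrixOrder in
theorem exists_piKron_sub_piKron_vecMulVec_eq_sub {n : Type*} [Fintype n] [DecidableEq n]
    (k : ℕ) {σ : Matrix n n ℂ} (hσ : σ.PosSemidef) (htr : σ.trace = 1) {ψ : n → ℂ}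
    (hψ : ∑ i, ‖ψ i‖ ^ 2 = 1) :
    ∃ X Y : Matrix (Fin k → n) (Fin k → n) ℂ, X.PosSemidef ∧ Y.PosSemidef ∧
      piKron (fun _ => σ) - piKron (fun _ => vecMulVec ψ (star ψ)) = X - Y ∧
      ∃ μ : ℝ, X.trace.re + Y.trace.re = 2 * k * μ ∧ μ ≤ 1 ∧
        μ ^ 2 ≤ 1 - (star ψ ⬝ᵥ (σ *ᵥ ψ)).re := by
  set P := vecMulVec ψ (star ψ)
  have hP : P.PosSemidef := posSemidef_vecMulVec_self_star ψ
  have hψψ : star ψ ⬝ᵥ ψ = 1 := by rw [star_dotProduct_self, hψ, Complex.ofReal_one]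
  have hPtr : P.trace = 1 := by rw [trace_vecMulVec, dotProduct_comm, hψψ]
  set Δ := σ - P
  have hΔ : Δ.IsHermitian := hσ.isHermitian.sub hP.isHermitian
  have hΔP : (Δ + P).PosSemidef := by simpa [Δ] using hσ
  have hΔtr : Δ.trace = 0 := by simp [Δ, htr, hPtr]
  have hpos : Δ⁺.PosSemidef := nonneg_iff_posSemidef.1 (CFC.posPart_nonneg Δ)
  have hneg : Δ⁻.PosSemidef := nonneg_iff_posSemidef.1 (CFC.negPart_nonneg Δ)
  have hsplit : Δ = Δ⁺ - Δ⁻ := (CFC.posPart_sub_negPart Δ hΔ.isSelfAdjoint).symm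
  obtain ⟨X, Y, hX, hY, hXY, htrX, htrY⟩ :=
    exists_piKron_const_sub_eq_sub k hσ hP hpos hneg htr hPtr hsplit
  have htrpos : Δ⁺.trace = Δ⁻.trace := by
    rw [← sub_eq_zero, ← trace_sub, ← hsplit, hΔtr]
  refine ⟨X, Y, hX, hY, hXY, Δ⁻.trace.re, ?_, (hΔ.re_trace_negPart_le hΔP).trans hψ.le, ?_⟩
  · rw [htrX, htrY, htrpos]
    simp only [Complex.mul_re, Complex.natCast_re, Complex.natCast_im, zero_mul, sub_zero]
    ring
  · have hPψ : star ψ ⬝ᵥ (P *ᵥ ψ) = 1 := by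
      simp [P, vecMulVec_mulVec, hψψ]
    have := hΔ.sq_re_trace_negPart_le hΔP hΔtr
    rwa [sub_mulVec, dotProduct_sub, hPψ, Complex.sub_re, Complex.one_re, neg_sub] at this

theorem fid_eq_re_star_dotProduct_mulVec {d : ℕ} (ψ : Fin d → ℂ) (σ : Matrix (Fin d) (Fin d) ℂ) :
    fid ψ σ = (star ψ ⬝ᵥ (σ *ᵥ ψ)).re := by
  simp [fid, dotProduct, mulVec, mul_sum, mul_assoc]

theorem kronPow_eq_piKron {d : ℕ} (M : Matrix (Fin d) (Fin d) ℂ) (k : ℕ) :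
    kronPow M k = piKron fun _ => M :=
  rfl

theorem ketbra_eq_vecMulVec {d : ℕ} (ψ : Fin d → ℂ) : ketbra ψ = vecMulVec ψ (star ψ) :=
  rfl

theorem mixture_kronPow_trace_dist_le_of_avg_fid_general {d m : ℕ} (ψ : Fin d → ℂ)
    (hψ : ∑ i, ‖ψ i‖ ^ 2 = 1)
    (k : ℕ) (a : ℝ) (ha : 0 < a) (δ : ℝ)
    (p : Fin m → ℝ) (hp0 : ∀ z, 0 ≤ p z) (hp1 : ∑ z, p z = 1)
    (σ : Fin m → Matrix (Fin d) (Fin d) ℂ)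
    (hσ : ∀ z, (σ z).PosSemidef) (hσtr : ∀ z, (σ z).trace = 1)
    (hδ : ∑ z, p z * (1 - fid ψ (σ z)) ≤ δ) :
    (1 / 2 : ℝ) * traceNorm (∑ z, (p z : ℂ) • kronPow (σ z) k - kronPow (ketbra ψ) k)
      ≤ (k : ℝ) * δ / a + (k : ℝ) * Real.sqrt a := by
  choose X Y hX hY hXY μ htr hμ1 hμ2 using
    fun z => exists_piKron_sub_piKron_vecMulVec_eq_sub k (hσ z) (hσtr z) hψ
  simp_rw [← fid_eq_re_star_dotProduct_mulVec] at hμ2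
  simp_rw [kronPow_eq_piKron, ketbra_eq_vecMulVec]
  calc _ ≤ (1 / 2 : ℝ) * ∑ z, p z * ((X z).trace.re + (Y z).trace.re) := by
        gcongr
        exact traceNorm_sum_smul_sub_le hp0 hp1 hX hY hXY
    _ = k * ∑ z, p z * μ z := by
        simp_rw [htr, mul_sum]
        exact sum_congr rfl fun z _ => by ring
    _ ≤ k * ∑ z, p z * ((1 - fid ψ (σ z)) / a + √a) := by
        gcongr with z
        · exact hp0 z
        · exact le_div_add_sqrt_of_sq_le ha (hμ1 z) (hμ2 z)
    _ = k * (∑ z, p z * (1 - fid ψ (σ z))) / a + k * √a := by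
        simp_rw [mul_add, sum_add_distrib, ← sum_mul, hp1, ← mul_div_assoc, ← sum_div]
        ring
    _ ≤ k * δ / a + k * √a := by gcongr

/-- Analytic core of the no-cloning theorem (statistical case):
δ-closeness on average yields a trace-distance bound kδ/a + k√a. -/
theorem mixture_kronPow_trace_dist_le_of_avg_fid {d m : ℕ} (ψ : Fin d → ℂ)
    (hψ : ∑ i, ‖ψ i‖ ^ 2 = 1)
    (k : ℕ) (hk : 1 ≤ k) (a : ℝ) (ha : 0 < a) (δ : ℝ)
    (p : Fin m → ℝ) (hp0 : ∀ z, 0 ≤ p z) (hp1 : ∑ z, p z = 1)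
    (σ : Fin m → Matrix (Fin d) (Fin d) ℂ)
    (hσ : ∀ z, (σ z).PosSemidef) (hσtr : ∀ z, (σ z).trace = 1)
    (hδ : ∑ z, p z * (1 - fid ψ (σ z)) ≤ δ) :
    (1 / 2 : ℝ) * traceNorm (∑ z, (p z : ℂ) • kronPow (σ z) k - kronPow (ketbra ψ) k)
      ≤ (k : ℝ) * δ / a + (k : ℝ) * Real.sqrt a :=
  mixture_kronPow_trace_dist_le_of_avg_fid_general ψ hψ k a ha δ p hp0 hp1 σ hσ hσtr hδ
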